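/- Every admissible pair in 𝔻² is ∼-equivalent to exactly one of the following pairs, and these pairs are pairwise non-equivalent: (1,0); (a,1) for a unique a ∈ 𝔻; (1, εa₁) for a unique nonzero real a₁. Moreover, for all real λ₁,λ₂ the pair (ελ₁, ελ₂) is not admissible. -/
import Mathlib


open TrivSqZeroExt

/-- The dual numbers `𝔻 = ℝ[ε]` with `ε² = 0`. -/
abbrev 𝔻 := DualNumber ℝ

/-- A pair `(a, b)` over a commutative ring `R` is *admissible* if there exist `c, d ∈ R`
such that `a*d - b*c` is a unit of `R`. -/
def Admissible {R : Type*} [CommRing R] (v : R × R) : Prop :=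
  ∃ c d : R, IsUnit (v.1 * d - v.2 * c)

/-- Two pairs are equivalent if one is a unit multiple of the other. -/
def PairEquiv {R : Type*} [CommRing R] (v w : R × R) : Prop :=
  ∃ u : Rˣ, v.1 = (u : R) * w.1 ∧ v.2 = (u : R) * w.2

/-- The list of representatives: `(1,0)`; `(a,1)` for `a ∈ 𝔻`; `(1, a₁ε)` for nonzero
real `a₁`. -/
def Reps : Set (𝔻 × 𝔻) :=
  {((1 : 𝔻), (0 : 𝔻))} ∪
  {p | ∃ a : 𝔻, p = (a, (1 : 𝔻))} ∪
  {p | ∃ a₁ : ℝ, a₁ ≠ 0 ∧ p = ((1 : 𝔻), a₁ • (DualNumber.eps : 𝔻))}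

lemma dunit_iff (x : 𝔻) : IsUnit x ↔ x.fst ≠ 0 := by
  rw [isUnit_iff_isUnit_fst, isUnit_iff_ne_zero]

lemma smul_eps_not_unit (t : ℝ) : ¬ IsUnit (t • DualNumber.eps : 𝔻) := by
  rw [dunit_iff]; simp

lemma pairEquiv_symm {R : Type*} [CommRing R] {v w : R × R} (h : PairEquiv v w) :
    PairEquiv w v := by
  obtain ⟨u, h1, h2⟩ := h
  exact ⟨u⁻¹, by rw [h1]; simp, by rw [h2]; simp⟩

lemma pairEquiv_trans {R : Type*} [CommRing R] {v w x : R × R} (h : PairEquiv v w)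
    (h' : PairEquiv w x) : PairEquiv v x := by
  obtain ⟨u, h1, h2⟩ := h
  obtain ⟨u', h1', h2'⟩ := h'
  exact ⟨u * u', by rw [h1, h1', Units.val_mul, mul_assoc], by rw [h2, h2', Units.val_mul, mul_assoc]⟩

lemma reps_unique {r₁ r₂ : 𝔻 × 𝔻} (h₁ : r₁ ∈ Reps) (h₂ : r₂ ∈ Reps)
    (h : PairEquiv r₁ r₂) : r₁ = r₂ := by
  obtain ⟨w, e1, e2⟩ := h
  rcases h₁ with (h₁ | ⟨a, rfl⟩) | ⟨t, ht, rfl⟩ <;>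
    rcases h₂ with (h₂ | ⟨a', rfl⟩) | ⟨s, hs, rfl⟩
  · rw [h₁, h₂]
  · rw [h₁] at e1 e2
    simp only [Prod.fst, Prod.snd, mul_one] at e2
    exact absurd e2.symm w.ne_zero
  · rw [h₁] at e1 e2
    simp only at e2
    have : (s • DualNumber.eps : 𝔻) = 0 := (Units.mul_right_eq_zero w).mp e2.symm
    exact absurd (by simpa using congrArg TrivSqZeroExt.snd this) hs
  · rw [Set.mem_singleton_iff] at h₂; rw [h₂] at e1 e2
    simp only [mul_zero] at e2
    exact absurd e2 one_ne_zero
  · simp only [mul_one] at e2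
    simp only [← e2, one_mul] at e1
    simp [e1]
  · simp only at e2
    have : IsUnit ((w : 𝔻) * s • DualNumber.eps) := e2 ▸ isUnit_one
    exact absurd ((Units.isUnit_units_mul w _).mp this) (smul_eps_not_unit s)
  · rw [Set.mem_singleton_iff] at h₂; rw [h₂] at e1 e2
    simp only [mul_zero] at e2
    exact absurd (by simpa using congrArg TrivSqZeroExt.snd e2) ht
  · simp only [mul_one] at e2
    exact absurd (e2 ▸ w.isUnit) (smul_eps_not_unit t)
  · simp only [mul_one] at e1
    simp only [← e1, one_mul] at e2
    simp [e2]


/-- Every admissible pair in `𝔻²` is equivalent to exactly one of the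
listed representatives (so the representatives are pairwise non-equivalent and the
parameters `a`, `a₁` are unique).  Moreover, for all real `λ₁, λ₂`, the pair
`(ελ₁, ελ₂)` is not admissible. -/
theorem dual_projective_line_classification :
    (∀ v : 𝔻 × 𝔻, Admissible v → ∃! r, r ∈ Reps ∧ PairEquiv v r) ∧
    (∀ l₁ l₂ : ℝ,
      ¬ Admissible ((l₁ • (DualNumber.eps : 𝔻), l₂ • (DualNumber.eps : 𝔻)))) := by
  constructor
  · rintro ⟨a, b⟩ ⟨c, d, hu⟩
    have hfst : a.fst * d.fst - b.fst * c.fst ≠ 0 := by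
      rw [dunit_iff] at hu; simpa using hu
    have hab : a.fst ≠ 0 ∨ b.fst ≠ 0 := by
      by_contra h
      push_neg at h
      rw [h.1, h.2] at hfst; simp at hfst
    have key : ∃ r, r ∈ Reps ∧ PairEquiv (a, b) r := by
      by_cases hb : b.fst = 0
      · have ha : a.fst ≠ 0 := by tauto
        obtain ⟨u, hu⟩ := (dunit_iff a).mpr ha
        set x : 𝔻 := (u⁻¹ : 𝔻ˣ) * b with hx
        have hxf : x.fst = 0 := by
          have : ((u⁻¹ : 𝔻ˣ) : 𝔻).fst * b.fst = 0 := by rw [hb, mul_zero]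
          simpa [hx] using this
        have hxe : x = x.snd • DualNumber.eps := by
          rw [← DualNumber.inr_eq_smul_eps]
          ext <;> simp [hxf]
        have hequiv : PairEquiv (a, b) (1, x) :=
          ⟨u, by simp [hu], by simp [hx, ← mul_assoc]⟩
        by_cases hxs : x.snd = 0
        · have : x = 0 := by ext <;> simp [hxf, hxs]
          exact ⟨(1, 0), Or.inl (Or.inl rfl), this ▸ hequiv⟩
        · exact ⟨(1, x.snd • DualNumber.eps), Or.inr ⟨x.snd, hxs, rfl⟩, hxe ▸ hequiv⟩
      · obtain ⟨u, hu⟩ := (dunit_iff b).mpr hb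
        exact ⟨((u⁻¹ : 𝔻ˣ) * a, 1), Or.inl (Or.inr ⟨_, rfl⟩),
          ⟨u, by simp [← mul_assoc], by simp [hu]⟩⟩
    obtain ⟨r, hr, he⟩ := key
    exact ⟨r, ⟨hr, he⟩, fun r' ⟨hr', he'⟩ =>
      reps_unique hr' hr (pairEquiv_trans (pairEquiv_symm he') he)⟩
  · rintro l₁ l₂ ⟨c, d, hu⟩
    rw [dunit_iff] at hu
    simp at hu
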